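/- Let (M₁,‖·‖₁),…,(Mₙ,‖·‖ₙ) be normed finitely generated ℤ-modules forming a chain of inclusions M₁ ⊆ M₂ ⊆ ⋯ ⊆ Mₙ, where each ‖·‖ᵢ is the restriction of ‖·‖ₙ. With Qᵢ = Mᵢ/M_{i-1} for i ≥ 2 and Q₁ = M₁, equipped with quotient norms, one has λ_ℚ(Mₙ,‖·‖ₙ) ≤ Σ_{i=1}^{n} λ_ℚ(Qᵢ, ‖·‖_{i,Mᵢ↠Qᵢ}) · rk(Qᵢ) where the i = n term may be taken without the factor rk(Qₙ), i.e., λ_ℚ(Mₙ,‖·‖ₙ) ≤ λ_ℚ(Qₙ,‖·‖_{n,Mₙ↠Qₙ}) + Σ_{i=1}^{n-1} λ_ℚ(Qᵢ,‖·‖_{i,Mᵢ↠Qᵢ}) rk(Qᵢ). -/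

import Mathlib

/-!
Write `μ(M)` for the covering radius of `M` in `ℝ ⊗ M`. Rounding real coordinates with respect
to a `ℚ`-basis of short lattice vectors gives `μ(M) ≤ rk(M) · λ_ℚ(M)`. For an isometric inclusion
`A ⊆ B` with quotient `Q`, a point of `ℝ ⊗ B` is first approximated through `Q` modulo `ℝ ⊗ A`
and then corrected by a lattice point of `A`, so `μ(B) ≤ μ(A) + μ(Q)`. The same correction lifts a
short `ℚ`-basis of `Q` to vectors of `B` of norm at most `λ_ℚ(Q) + μ(A)`; adjoining a short basis
of `A` shows `λ_ℚ(B) ≤ λ_ℚ(Q) + c` whenever `c` bounds both `λ_ℚ(A)` and `μ(A)`. Along the chain,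
`λ_ℚ(M₀) rk(M₀) + Σ_{0 < j ≤ i} λ_ℚ(Qⱼ) rk(Qⱼ)` bounds both `λ_ℚ(Mᵢ)` and `μ(Mᵢ)`; at the top
step only the `λ_ℚ` estimate is needed, which is why the top quotient carries no rank factor.
-/

open scoped TensorProduct

/-- `N` is a norm on the real vector space `V`. -/
def IsNorm {V : Type*} [AddCommGroup V] [Module ℝ V] (N : V → ℝ) : Prop :=
  (∀ v, N v = 0 ↔ v = 0) ∧ (∀ (r : ℝ) (v : V), N (r • v) = |r| * N v) ∧
    ∀ v w, N (v + w) ≤ N v + N w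

/-- `λ_ℚ(M, N)`: the infimum of all `l` such that some elements of `M` forming a
`ℚ`-basis of `M ⊗ ℚ` all have norm `≤ l`. -/
noncomputable def lambdaQ {M : Type*} [AddCommGroup M] (N : ℝ ⊗[ℤ] M → ℝ) : ℝ :=
  sInf {l | ∃ (n : ℕ) (e : Fin n → M),
    LinearIndependent ℚ (fun i => ((1 : ℚ) ⊗ₜ[ℤ] e i : ℚ ⊗[ℤ] M)) ∧
    Submodule.span ℚ (Set.range fun i => ((1 : ℚ) ⊗ₜ[ℤ] e i : ℚ ⊗[ℤ] M)) = ⊤ ∧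
    ∀ i, N ((1 : ℝ) ⊗ₜ[ℤ] e i) ≤ l}

/-- The quotient norm of `N` along a linear surjection `π`: `inf { N v | π v = t }`. -/
noncomputable def qNorm {X Y : Type*} [AddCommGroup X] [AddCommGroup Y]
    [Module ℝ X] [Module ℝ Y] (N : X → ℝ) (π : X →ₗ[ℝ] Y) (t : Y) : ℝ :=
  sInf {c | ∃ v, π v = t ∧ N v = c}

/-- The operator norm of the real-linear map induced by `φ`. -/
noncomputable def opNorm {M₁ M₂ : Type*} [AddCommGroup M₁] [AddCommGroup M₂]
    (N₁ : ℝ ⊗[ℤ] M₁ → ℝ) (N₂ : ℝ ⊗[ℤ] M₂ → ℝ) (φ : M₁ →ₗ[ℤ] M₂) : ℝ :=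
  sSup {c | ∃ v, N₁ v = 1 ∧ N₂ (LinearMap.baseChange ℝ φ v) = c}

open Function Module

section Seminorms
variable {V : Type*} [AddCommGroup V] [Module ℝ V]

noncomputable def IsNorm.toSeminorm {N : V → ℝ} (hN : IsNorm N) : Seminorm ℝ V :=
  .of N hN.2.2 fun r v => by rw [hN.2.1, Real.norm_eq_abs]

lemma Seminorm.sum_fract_smul_le (p : Seminorm ℝ V) {ι : Type*} [Fintype ι] (t : ι → ℝ)
    (v : ι → V) {c : ℝ} (hv : ∀ i, p (v i) ≤ c) :
    p (∑ i, Int.fract (t i) • v i) ≤ Fintype.card ι * c := by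
  calc p (∑ i, Int.fract (t i) • v i) ≤ ∑ i, p (Int.fract (t i) • v i) :=
        Finset.le_sum_of_subadditive p (map_zero p).le (map_add_le_add p) _ _
    _ ≤ ∑ _i : ι, c := by
      gcongr with i
      rw [map_smul_eq_mul, Real.norm_of_nonneg (Int.fract_nonneg _)]
      exact (mul_le_of_le_one_left (apply_nonneg _ _) (Int.fract_lt_one _).le).trans (hv i)
    _ = Fintype.card ι * c := by simp

end Seminorms

section QuotientSeminorm
variable {X Y : Type*} [AddCommGroup X] [AddCommGroup Y] [Module ℝ X] [Module ℝ Y]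
  (p : Seminorm ℝ X) {π : X →ₗ[ℝ] Y}

lemma qNorm_le {v : X} {t : Y} (h : π v = t) : qNorm p π t ≤ p v :=
  csInf_le ⟨0, fun _ ⟨w, _, hw⟩ => hw ▸ apply_nonneg p w⟩ ⟨v, h, rfl⟩

lemma exists_lt_qNorm_add (hπ : Surjective π) (t : Y) {ε : ℝ} (hε : 0 < ε) :
    ∃ v, π v = t ∧ p v < qNorm p π t + ε := by
  obtain ⟨v₀, hv₀⟩ := hπ t
  obtain ⟨_, ⟨v, hv, rfl⟩, hlt⟩ := Real.lt_sInf_add_pos (s := {c | ∃ v, π v = t ∧ p v = c})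
    ⟨p v₀, v₀, hv₀, rfl⟩ hε
  exact ⟨v, hv, hlt⟩

lemma qNorm_nonneg (t : Y) : 0 ≤ qNorm p π t :=
  Real.sInf_nonneg fun _ ⟨v, _, hv⟩ => hv ▸ apply_nonneg p v

noncomputable def Seminorm.quotient (hπ : Surjective π) : Seminorm ℝ Y :=
  .ofSMulLE (qNorm p π)
    (le_antisymm (by simpa using qNorm_le p (map_zero π)) (qNorm_nonneg p 0))
    (fun s t => le_of_forall_pos_lt_add fun ε hε => by
      obtain ⟨v, rfl, hv⟩ := exists_lt_qNorm_add p hπ s (half_pos hε)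
      obtain ⟨w, rfl, hw⟩ := exists_lt_qNorm_add p hπ t (half_pos hε)
      calc qNorm p π (π v + π w) ≤ p (v + w) := qNorm_le p (map_add π v w)
        _ ≤ p v + p w := map_add_le_add p v w
        _ < _ := by linarith)
    (fun r t => by
      rcases eq_or_ne r 0 with rfl | hr
      · simpa using qNorm_le p (map_zero π)
      refine le_of_forall_pos_lt_add fun ε hε => ?_
      obtain ⟨v, rfl, hv⟩ := exists_lt_qNorm_add p hπ t (div_pos hε (norm_pos_iff.2 hr))
      calc qNorm p π (r • π v) ≤ p (r • v) := qNorm_le p (map_smul π r v)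
        _ = ‖r‖ * p v := map_smul_eq_mul p r v
        _ < ‖r‖ * qNorm p π (π v) + ε := by
          have := mul_lt_mul_of_pos_left hv (norm_pos_iff.2 hr)
          rwa [mul_add, mul_div_cancel₀ _ (norm_ne_zero_iff.2 hr)] at this)

@[simp] lemma Seminorm.coe_quotient (hπ : Surjective π) : ⇑(p.quotient hπ) = qNorm p π := rfl

end QuotientSeminorm

section RatBasis
variable {M : Type*} [AddCommGroup M] {ι : Type*} {e : ι → M}

def IsRatBasis (e : ι → M) : Prop :=
  LinearIndependent ℚ (fun i => (1 : ℚ) ⊗ₜ[ℤ] e i : ι → ℚ ⊗[ℤ] M) ∧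
    Submodule.span ℚ (Set.range fun i => ((1 : ℚ) ⊗ₜ[ℤ] e i : ℚ ⊗[ℤ] M)) = ⊤

noncomputable def IsRatBasis.basis (he : IsRatBasis e) : Basis ι ℚ (ℚ ⊗[ℤ] M) :=
  .mk he.1 he.2.ge

lemma IsRatBasis.card_eq_finrank [Fintype ι] (he : IsRatBasis e) :
    Fintype.card ι = finrank ℚ (ℚ ⊗[ℤ] M) :=
  (finrank_eq_card_basis he.basis).symm

lemma IsRatBasis.comp_equiv {κ : Type*} (he : IsRatBasis e) (σ : κ ≃ ι) : IsRatBasis (e ∘ σ) :=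
  ⟨he.1.comp σ σ.injective, by
    rw [← he.2]; exact congrArg _ (EquivLike.range_comp (fun i => (1 : ℚ) ⊗ₜ[ℤ] e i) σ)⟩

lemma IsRatBasis.span_real_eq_top (he : IsRatBasis e) :
    Submodule.span ℝ (Set.range fun i => ((1 : ℝ) ⊗ₜ[ℤ] e i : ℝ ⊗[ℤ] M)) = ⊤ := by
  let b : Basis ι ℝ (ℝ ⊗[ℤ] M) := (Algebra.TensorProduct.basis ℝ he.basis).map
    (TensorProduct.AlgebraTensorModule.cancelBaseChange ℤ ℚ ℝ ℝ M)
  have hb : ∀ i, b i = (1 : ℝ) ⊗ₜ[ℤ] e i := fun i => by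
    simp [b, IsRatBasis.basis]
  convert b.span_eq using 3
  exact funext fun i => (hb i).symm

lemma exists_isRatBasis (M : Type*) [AddCommGroup M] [Module.Finite ℤ M] :
    ∃ (m : ℕ) (e : Fin m → M), IsRatBasis e := by
  obtain ⟨κ, a, -, hsp, hli⟩ := exists_linearIndependent' ℚ (fun m : M => (1 : ℚ) ⊗ₜ[ℤ] m)
  have htop : Submodule.span ℚ (Set.range fun m : M => (1 : ℚ) ⊗ₜ[ℤ] m) = ⊤ := by
    have := (Submodule.baseChange_eq_span ℚ (⊤ : Submodule ℤ M)).symm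
    rwa [Submodule.baseChange_top, Submodule.map_top, LinearMap.coe_range] at this
  have : Finite κ := hli.finite
  exact ⟨_, _, IsRatBasis.comp_equiv ⟨hli, hsp.trans htop⟩ (Finite.equivFin κ).symm⟩

end RatBasis

section LambdaQ
variable {M : Type*} [AddCommGroup M] {N : ℝ ⊗[ℤ] M → ℝ}

def lambdaQBounds (N : ℝ ⊗[ℤ] M → ℝ) : Set ℝ :=
  {l | ∃ (n : ℕ) (e : Fin n → M), IsRatBasis e ∧ ∀ i, N ((1 : ℝ) ⊗ₜ[ℤ] e i) ≤ l}

lemma lambdaQ_eq_sInf (N : ℝ ⊗[ℤ] M → ℝ) : lambdaQ N = sInf (lambdaQBounds N) := by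
  simp only [lambdaQ, lambdaQBounds, IsRatBasis, and_assoc]

lemma lambdaQ_le_of_isRatBasis {ι : Type*} [Fintype ι] {e : ι → M} (he : IsRatBasis e) {l : ℝ}
    (hle : ∀ i, N ((1 : ℝ) ⊗ₜ[ℤ] e i) ≤ l) (hl : 0 ≤ l) : lambdaQ N ≤ l := by
  have hmem : l ∈ lambdaQBounds N := ⟨_, _, he.comp_equiv (Fintype.equivFin ι).symm, fun i => hle _⟩
  rw [lambdaQ_eq_sInf]
  by_cases hb : BddBelow (lambdaQBounds N)
  · exact csInf_le hb hmem
  · exact (Real.sInf_of_not_bddBelow hb).trans_le hl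

lemma exists_isRatBasis_lt_lambdaQ_add [Module.Finite ℤ M] (N : ℝ ⊗[ℤ] M → ℝ) {ε : ℝ}
    (hε : 0 < ε) : ∃ (m : ℕ) (e : Fin m → M), IsRatBasis e ∧
      ∀ i, N ((1 : ℝ) ⊗ₜ[ℤ] e i) < lambdaQ N + ε := by
  obtain ⟨m₀, e₀, he₀⟩ := exists_isRatBasis M
  obtain ⟨l, hl⟩ := Finite.exists_le fun i => N ((1 : ℝ) ⊗ₜ[ℤ] e₀ i)
  rw [lambdaQ_eq_sInf]
  obtain ⟨_, ⟨m, e, he, hle⟩, hlt⟩ := Real.lt_sInf_add_pos (s := lambdaQBounds N)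
    ⟨l, m₀, e₀, he₀, hl⟩ hε
  exact ⟨m, e, he, fun i => (hle i).trans_lt hlt⟩

lemma lambdaQ_nonneg (hN : ∀ v, 0 ≤ N v) : 0 ≤ lambdaQ N := by
  rw [lambdaQ_eq_sInf]
  by_cases h : ∀ l ∈ lambdaQBounds N, 0 ≤ l
  · exact Real.sInf_nonneg h
  push Not at h
  obtain ⟨l, ⟨m, e, he, hle⟩, hl⟩ := h
  obtain rfl : m = 0 := by
    by_contra hm
    exact hl.not_ge ((hN _).trans (hle ⟨0, Nat.pos_of_ne_zero hm⟩))
  -- so the empty family is a basis, `lambdaQBounds N` is all of `ℝ` and its `sInf` is junk `0`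
  refine (Real.sInf_of_not_bddBelow fun ⟨b, hb⟩ => ?_).ge
  linarith [hb ⟨0, e, he, fun i => i.elim0⟩ (a := b - 1)]

lemma lambdaQ_le_mul_finrank [Module.Finite ℤ M] (hN : ∀ v, 0 ≤ N v) :
    lambdaQ N ≤ lambdaQ N * finrank ℚ (ℚ ⊗[ℤ] M) := by
  rcases Nat.eq_zero_or_pos (finrank ℚ (ℚ ⊗[ℤ] M)) with h | h
  · have : Subsingleton (ℚ ⊗[ℤ] M) := finrank_zero_iff.mp h
    rw [h, Nat.cast_zero, mul_zero]
    exact lambdaQ_le_of_isRatBasis (e := Fin.elim0)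
      ⟨linearIndependent_empty_type, Subsingleton.elim _ _⟩ (fun i => i.elim0) le_rfl
  · exact le_mul_of_one_le_right (lambdaQ_nonneg hN) (by exact_mod_cast h)

end LambdaQ

section Covering
variable {M : Type*} [AddCommGroup M]

/-- `c` bounds the covering radius of the lattice `M` in `ℝ ⊗ M` with respect to `N`. -/
def IsCoveringBound (N : ℝ ⊗[ℤ] M → ℝ) (c : ℝ) : Prop :=
  ∀ w : ℝ ⊗[ℤ] M, ∀ ε > 0, ∃ a : M, N (w - (1 : ℝ) ⊗ₜ[ℤ] a) ≤ c + ε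

lemma tmul_sub_tmul_sum_floor {ι : Type*} [Fintype ι] (t : ι → ℝ) (e : ι → M) :
    ∑ i, t i • ((1 : ℝ) ⊗ₜ[ℤ] e i : ℝ ⊗[ℤ] M) - (1 : ℝ) ⊗ₜ[ℤ] ∑ i, ⌊t i⌋ • e i =
      ∑ i, Int.fract (t i) • (1 : ℝ) ⊗ₜ[ℤ] e i := by
  simp only [TensorProduct.tmul_sum, TensorProduct.tmul_smul, ← Finset.sum_sub_distrib,
    Int.fract, sub_smul, Int.cast_smul_eq_zsmul]

lemma isCoveringBound_lambdaQ_mul_finrank [Module.Finite ℤ M] (p : Seminorm ℝ (ℝ ⊗[ℤ] M)) :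
    IsCoveringBound p (lambdaQ p * finrank ℚ (ℚ ⊗[ℤ] M)) := by
  intro w ε hε
  set r := finrank ℚ (ℚ ⊗[ℤ] M)
  obtain ⟨m, e, he, hlt⟩ := exists_isRatBasis_lt_lambdaQ_add p (div_pos hε (r.cast_add_one_pos))
  obtain ⟨t, rfl⟩ := (Submodule.mem_span_range_iff_exists_fun ℝ).1
    (he.span_real_eq_top ▸ Submodule.mem_top (x := w))
  refine ⟨∑ i, ⌊t i⌋ • e i, ?_⟩
  have hm : m = r := (Fintype.card_fin m).symm.trans he.card_eq_finrank
  rw [tmul_sub_tmul_sum_floor]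
  refine (p.sum_fract_smul_le t _ fun i => (hlt i).le).trans ?_
  rw [Fintype.card_fin, hm, mul_add, mul_comm]
  gcongr
  rw [mul_div_assoc']
  exact div_le_of_le_mul₀ (by positivity) hε.le (by nlinarith)

end Covering

section ShortExact
variable {R V W U : Type*} [Ring R] [AddCommGroup V] [AddCommGroup W] [AddCommGroup U]
  [Module R V] [Module R W] [Module R U] {f : V →ₗ[R] W} {g : W →ₗ[R] U}
  {ι κ : Type*} {u : ι → V} {w : κ → W}

lemma linearIndependent_sumElim_of_exact (hfg : Exact f g) (hf : Injective f)
    (hu : LinearIndependent R u) (hw : LinearIndependent R (g ∘ w)) :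
    LinearIndependent R (Sum.elim (f ∘ u) w) := by
  refine (hu.map' f (LinearMap.ker_eq_bot.2 hf)).sum_type (hw.of_comp g) ?_
  refine (Submodule.range_ker_disjoint hw).symm.mono_left ?_
  rw [hfg.linearMap_ker_eq, Submodule.span_le, Set.range_comp]
  exact Set.image_subset_range _ _

lemma span_sumElim_eq_top_of_exact (hfg : Exact f g) (hu : Submodule.span R (Set.range u) = ⊤)
    (hw : Submodule.span R (Set.range (g ∘ w)) = ⊤) :
    Submodule.span R (Set.range (Sum.elim (f ∘ u) w)) = ⊤ := by
  set S := Submodule.span R (Set.range (Sum.elim (f ∘ u) w))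
  have hker : LinearMap.ker g ≤ S := by
    rw [hfg.linearMap_ker_eq, LinearMap.range_eq_map, ← hu, Submodule.map_span, ← Set.range_comp]
    exact Submodule.span_mono (Set.range_subset_iff.2 fun i => ⟨.inl i, rfl⟩)
  have hmap : Submodule.map g S = ⊤ := by
    rw [eq_top_iff, ← hw, Submodule.map_span, Set.range_comp]
    exact Submodule.span_mono (Set.image_mono (Set.range_subset_iff.2 fun j => ⟨.inr j, rfl⟩))
  rw [← sup_eq_left.2 hker, ← Submodule.comap_map_eq, hmap, Submodule.comap_top]

end ShortExact

section BaseChange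
variable {R S A B : Type*} [CommRing R] [CommRing S] [Algebra R S]
  [AddCommGroup A] [AddCommGroup B] [Module R A] [Module R B] (α : A →ₗ[R] B)

lemma exact_baseChange_mkQ_range :
    Exact (α.baseChange S) ((LinearMap.range α).mkQ.baseChange S) := by
  rw [LinearMap.baseChange_eq_ltensor, LinearMap.baseChange_eq_ltensor]
  exact lTensor_exact S (LinearMap.exact_map_mkQ_range α) (Submodule.mkQ_surjective _)

lemma baseChange_mkQ_surjective :
    Surjective ((LinearMap.range α).mkQ.baseChange S) :=
  LinearMap.baseChange_surjective S (Submodule.mkQ_surjective _)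

lemma baseChange_injective_of_flat [Module.Flat R S] (hα : Injective α) :
    Injective (α.baseChange S) := by
  rw [LinearMap.baseChange_eq_ltensor]
  exact Module.Flat.lTensor_preserves_injective_linearMap α hα

end BaseChange

section Extension
variable {A B : Type*} [AddCommGroup A] [AddCommGroup B] {α : A →ₗ[ℤ] B}
  {pA : Seminorm ℝ (ℝ ⊗[ℤ] A)} {pB : Seminorm ℝ (ℝ ⊗[ℤ] B)} {cA : ℝ}

local notation "π" => LinearMap.baseChange ℝ (Submodule.mkQ (LinearMap.range α))

lemma exists_tmul_sub_le_qNorm_add (hα : ∀ v, pB (α.baseChange ℝ v) ≤ pA v)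
    (hA : IsCoveringBound pA cA) (w : ℝ ⊗[ℤ] B) (b₀ : B) {ε : ℝ} (hε : 0 < ε) :
    ∃ a : A, pB ((1 : ℝ) ⊗ₜ[ℤ] (b₀ - α a) - w) ≤
      qNorm pB π ((1 : ℝ) ⊗ₜ[ℤ] (LinearMap.range α).mkQ b₀ - π w) + cA + ε := by
  obtain ⟨v, hv, hvlt⟩ := exists_lt_qNorm_add pB (baseChange_mkQ_surjective α)
    ((1 : ℝ) ⊗ₜ[ℤ] (LinearMap.range α).mkQ b₀ - π w) (half_pos hε)
  obtain ⟨y, hy⟩ : ∃ y, α.baseChange ℝ y = (1 : ℝ) ⊗ₜ[ℤ] b₀ - w - v := by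
    refine (exact_baseChange_mkQ_range α _).1 ?_
    rw [map_sub, map_sub, hv, LinearMap.baseChange_tmul]
    exact sub_self _
  obtain ⟨a, ha⟩ := hA y _ (half_pos hε)
  have hsplit : (1 : ℝ) ⊗ₜ[ℤ] (b₀ - α a) - w = v + α.baseChange ℝ (y - (1 : ℝ) ⊗ₜ[ℤ] a) := by
    rw [map_sub, hy, LinearMap.baseChange_tmul, TensorProduct.tmul_sub]
    abel
  refine ⟨a, ?_⟩
  calc pB ((1 : ℝ) ⊗ₜ[ℤ] (b₀ - α a) - w)
      ≤ pB v + pB (α.baseChange ℝ (y - (1 : ℝ) ⊗ₜ[ℤ] a)) := hsplit ▸ map_add_le_add _ _ _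
    _ ≤ pB v + pA (y - (1 : ℝ) ⊗ₜ[ℤ] a) := by gcongr; exact hα _
    _ ≤ _ := by linarith

lemma IsCoveringBound.of_quotient (hα : ∀ v, pB (α.baseChange ℝ v) ≤ pA v)
    (hA : IsCoveringBound pA cA) {cQ : ℝ} (hQ : IsCoveringBound (qNorm pB π) cQ) :
    IsCoveringBound pB (cA + cQ) := by
  intro w ε hε
  obtain ⟨q, hq⟩ := hQ (π w) _ (half_pos hε)
  obtain ⟨b₀, rfl⟩ := Submodule.mkQ_surjective _ q
  obtain ⟨a, ha⟩ := exists_tmul_sub_le_qNorm_add hα hA w b₀ (half_pos hε)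
  refine ⟨b₀ - α a, ?_⟩
  have hsymm := map_sub_rev (pB.quotient (baseChange_mkQ_surjective α))
    ((1 : ℝ) ⊗ₜ[ℤ] (LinearMap.range α).mkQ b₀) (π w)
  rw [Seminorm.coe_quotient] at hsymm
  rw [map_sub_rev]
  linarith

lemma exists_mkQ_eq_tmul_le (hα : ∀ v, pB (α.baseChange ℝ v) ≤ pA v)
    (hA : IsCoveringBound pA cA) (q : B ⧸ LinearMap.range α) {ε : ℝ} (hε : 0 < ε) :
    ∃ b : B, (LinearMap.range α).mkQ b = q ∧
      pB ((1 : ℝ) ⊗ₜ[ℤ] b) ≤ qNorm pB π ((1 : ℝ) ⊗ₜ[ℤ] q) + cA + ε := by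
  obtain ⟨b₀, rfl⟩ := Submodule.mkQ_surjective _ q
  obtain ⟨a, ha⟩ := exists_tmul_sub_le_qNorm_add hα hA 0 b₀ hε
  refine ⟨b₀ - α a, ?_, by simpa using ha⟩
  simp

lemma IsRatBasis.sumElim (hα : Injective α) {ι κ : Type*} {eA : ι → A} {b : κ → B}
    (heA : IsRatBasis eA) (hb : IsRatBasis ((LinearMap.range α).mkQ ∘ b)) :
    IsRatBasis (Sum.elim (α ∘ eA) b) := by
  have hfam : (fun i => (1 : ℚ) ⊗ₜ[ℤ] Sum.elim (α ∘ eA) b i) =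
      Sum.elim (α.baseChange ℚ ∘ fun i => (1 : ℚ) ⊗ₜ[ℤ] eA i) fun j => (1 : ℚ) ⊗ₜ[ℤ] b j :=
    funext (Sum.rec (fun _ => rfl) fun _ => rfl)
  have hexact := exact_baseChange_mkQ_range (S := ℚ) α
  rw [IsRatBasis, hfam]
  exact ⟨linearIndependent_sumElim_of_exact hexact (baseChange_injective_of_flat α hα) heA.1 hb.1,
    span_sumElim_eq_top_of_exact hexact heA.2 hb.2⟩

lemma lambdaQ_le_lambdaQ_qNorm_add [Module.Finite ℤ A] [Module.Finite ℤ B]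
    (hα : ∀ v, pB (α.baseChange ℝ v) ≤ pA v) (hinj : Injective α)
    (hA : IsCoveringBound pA cA) (hlam : lambdaQ pA ≤ cA) :
    lambdaQ pB ≤ lambdaQ (qNorm pB π) + cA := by
  have hT : 0 ≤ lambdaQ (qNorm pB π) := lambdaQ_nonneg (qNorm_nonneg pB)
  have hA0 : 0 ≤ lambdaQ pA := lambdaQ_nonneg (apply_nonneg pA)
  refine le_of_forall_pos_le_add fun ε hε => ?_
  obtain ⟨_, eA, heA, hltA⟩ := exists_isRatBasis_lt_lambdaQ_add pA (half_pos hε)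
  obtain ⟨_, q, hq, hltQ⟩ := exists_isRatBasis_lt_lambdaQ_add (qNorm pB π) (half_pos hε)
  choose b hbq hb using fun j => exists_mkQ_eq_tmul_le hα hA (q j) (half_pos hε)
  refine lambdaQ_le_of_isRatBasis (heA.sumElim hinj (by rwa [comp_def, funext hbq]))
    (Sum.rec (fun i => ?_) fun j => ?_) (by linarith)
  · have := hα ((1 : ℝ) ⊗ₜ[ℤ] eA i)
    rw [LinearMap.baseChange_tmul] at this
    exact this.trans (by linarith [hltA i])
  · exact (hb j).trans (by linarith [hltQ j])

lemma isCoveringBound_and_lambdaQ_le_add_mul_finrank [Module.Finite ℤ A] [Module.Finite ℤ B]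
    (hα : ∀ v, pB (α.baseChange ℝ v) ≤ pA v) (hinj : Injective α)
    (hA : IsCoveringBound pA cA) (hlam : lambdaQ pA ≤ cA) :
    IsCoveringBound pB (cA + lambdaQ (qNorm pB π) * finrank ℚ (ℚ ⊗[ℤ] (B ⧸ LinearMap.range α))) ∧
      lambdaQ pB ≤ cA + lambdaQ (qNorm pB π) * finrank ℚ (ℚ ⊗[ℤ] (B ⧸ LinearMap.range α)) := by
  have hQ := isCoveringBound_lambdaQ_mul_finrank (pB.quotient (baseChange_mkQ_surjective α))
  rw [Seminorm.coe_quotient] at hQ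
  refine ⟨hA.of_quotient hα hQ, (lambdaQ_le_lambdaQ_qNorm_add hα hinj hA hlam).trans ?_⟩
  linarith [lambdaQ_le_mul_finrank (N := qNorm pB π) (qNorm_nonneg pB)]

end Extension

/-- **chain estimate for isometric inclusions.** Given a chain of
inclusions `M 0 ⊆ M 1 ⊆ ⋯ ⊆ M (n+1)` of normed finitely generated `ℤ`-modules where each
norm is the restriction of the next one (hence of that of `M (n+1)`), with
`Q 0 = M 0` and `Q (i+1) = M (i+1)/M i` carrying the quotient norms, one has
`λ_ℚ(M (n+1)) ≤ λ_ℚ(Q (n+1)) + ∑_{i=0}^{n} λ_ℚ(Q i) · rk (Q i)`, where the top term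
(`i = n+1`) is taken without the rank factor. -/
theorem lambdaQ_chain_estimate_of_isometric (n : ℕ)
    (M : Fin (n + 2) → Type*) [∀ i, AddCommGroup (M i)] [∀ i, Module.Finite ℤ (M i)]
    (N : ∀ i, ℝ ⊗[ℤ] M i → ℝ) (hN : ∀ i, IsNorm (N i))
    (α : ∀ i : Fin (n + 1), M i.castSucc →ₗ[ℤ] M i.succ)
    (hinj : ∀ i, Function.Injective (α i))
    (hisom : ∀ i (v : ℝ ⊗[ℤ] M i.castSucc),
      N i.succ (LinearMap.baseChange ℝ (α i) v) = N i.castSucc v) :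
    lambdaQ (N (Fin.last (n + 1))) ≤
      lambdaQ (qNorm (N (Fin.last n).succ)
          (LinearMap.baseChange ℝ (LinearMap.range (α (Fin.last n))).mkQ))
        + lambdaQ (N 0) * (Module.finrank ℚ (ℚ ⊗[ℤ] M 0) : ℝ)
        + ∑ k : Fin n,
            lambdaQ (qNorm (N k.castSucc.succ)
                (LinearMap.baseChange ℝ (LinearMap.range (α k.castSucc)).mkQ))
              * (Module.finrank ℚ
                  (ℚ ⊗[ℤ] (M k.castSucc.succ ⧸ LinearMap.range (α k.castSucc))) : ℝ) := by
  let p i := (hN i).toSeminorm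
  let T : Fin (n + 1) → ℝ := fun k =>
    lambdaQ (qNorm (N k.succ) ((LinearMap.range (α k)).mkQ.baseChange ℝ)) *
      finrank ℚ (ℚ ⊗[ℤ] (M k.succ ⧸ LinearMap.range (α k)))
  let C : Fin (n + 2) → ℝ := fun i =>
    lambdaQ (N 0) * finrank ℚ (ℚ ⊗[ℤ] M 0) + Fin.partialSum T i
  have hC : ∀ i, IsCoveringBound (N i) (C i) ∧ lambdaQ (N i) ≤ C i := by
    intro i
    induction i using Fin.induction with
    | zero =>
      simp only [C, Fin.partialSum_zero, add_zero]
      exact ⟨isCoveringBound_lambdaQ_mul_finrank (p 0), lambdaQ_le_mul_finrank (apply_nonneg (p 0))⟩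
    | succ i ih =>
      simp only [C, Fin.partialSum_succ, ← add_assoc]
      exact isCoveringBound_and_lambdaQ_le_add_mul_finrank (pA := p _) (pB := p _)
        (fun v => (hisom i v).le) (hinj i) ih.1 ih.2
  obtain ⟨hcov, hlam⟩ := hC (Fin.last n).castSucc
  have hlast := lambdaQ_le_lambdaQ_qNorm_add (pA := p _) (pB := p _)
    (fun v => (hisom (Fin.last n) v).le) (hinj _) hcov hlam
  have hsum : Fin.partialSum T (Fin.last n).castSucc = ∑ k : Fin n, T k.castSucc := by
    rw [← Fin.partialSum_init]
    simp [Fin.partialSum, List.take_of_length_le, List.sum_ofFn, Fin.init]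
  simp only [C, hsum] at hlast
  exact hlast.trans_eq (add_assoc _ _ _).symm
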